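/- Let X be a Banach space, φ : X → ℝ∪{+∞} a proper lower semicontinuous function, S_φ := {x ∈ X : φ(x) ≤ 0}, τ > 0, and x ∈ S_φ. Then e({h ∈ X : φ'_H(x; h) ≤ 1}, T^B(S_φ, x)) ≤ τ if and only if d(h, T^B(S_φ, x)) ≤ τ·max{φ'_H(x; h), 0} for all h ∈ X. -/

import Mathlib

open Filter Metric Set Pointwise Topology
open scoped ENNReal

noncomputable section

/-- The Bouligand (contingent) tangent cone of `A` at `u`. -/
def bouligand {X : Type*} [NormedAddCommGroup X] [NormedSpace ℝ X] (A : Set X) (u : X) :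
    Set X :=
  {v | ∃ (vs : ℕ → X) (ts : ℕ → ℝ),
    Tendsto vs atTop (𝓝 v) ∧ Tendsto ts atTop (𝓝 0) ∧ (∀ n, 0 < ts n) ∧
    ∀ n, u + ts n • vs n ∈ A}

/-- The Shapiro first order contact property of `A` at `a`. -/
def shapiro {X : Type*} [NormedAddCommGroup X] [NormedSpace ℝ X] (A : Set X) (a : X) : Prop :=
  ∀ ε > 0, ∃ δ > 0, ∀ x ∈ A ∩ ball a δ, ∀ u ∈ A ∩ ball a δ,
    infDist (x - u) (bouligand A u) ≤ ε * ‖x - u‖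

/-- The lower Hadamard directional derivative of `φ` at `x` in direction `h`. -/
def hadamardDeriv {X : Type*} [NormedAddCommGroup X] [NormedSpace ℝ X]
    (φ : X → EReal) (x h : X) : EReal :=
  liminf (fun p : ℝ × X => (((1 : ℝ) / p.1 : ℝ) : EReal) * (φ (x + p.1 • p.2) - φ x))
    ((𝓝[>] (0 : ℝ)) ×ˢ 𝓝 h)

/-- The epigraph of an `EReal`-valued function, as a subset of `X × ℝ`. -/
def epigraph {X : Type*} (φ : X → EReal) : Set (X × ℝ) := {p | φ p.1 ≤ (p.2 : EReal)}

/-- The Hausdorff-Pompeiu excess of `C` beyond `D`. -/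
def excess {X : Type*} [PseudoEMetricSpace X] (C D : Set X) : ℝ≥0∞ :=
  ⨆ c ∈ C, EMetric.infEdist c D

/-- Metric regularity of `φ` around `xbar` (for `φ xbar`). -/
def metReg {X Y : Type*} [NormedAddCommGroup X] [NormedAddCommGroup Y]
    (φ : X → Y) (xbar : X) : Prop :=
  ∃ κ > (0 : ℝ), ∃ U ∈ 𝓝 xbar, ∃ V ∈ 𝓝 (φ xbar), ∀ x ∈ U, ∀ y ∈ V,
    EMetric.infEdist x (φ ⁻¹' {y}) ≤ ENNReal.ofReal (κ * ‖φ x - y‖)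

/-!
Both sides of the equivalence only involve positively homogeneous functions of the direction `h`:
the Bouligand cone is invariant under positive dilations, so `h ↦ d(h, T^B(S, x))` is positively
homogeneous, and so is `h ↦ φ'_H(x; h)`, because the change of variables `(t, k) ↦ (t / c, c • k)`
carries the filter defining the derivative in direction `h` to the one in direction `c • h`. A
bound `d ≤ τ` on the sublevel set `{φ'_H ≤ 1}` then rescales to `d ≤ τ · max(φ'_H, 0)` everywhere;
directions with `φ'_H(x; h) ≤ 0` can be blown up inside the sublevel set, forcing `d = 0`.
-/

lemma map_prodMap_nhdsGT_zero_nhds {X : Type*} [TopologicalSpace X] [MulAction ℝ X]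
    [ContinuousConstSMul ℝ X] {c : ℝ} (hc : 0 < c) (h : X) :
    map (Prod.map (c⁻¹ * ·) (c • ·)) (𝓝[>] (0 : ℝ) ×ˢ 𝓝 h) = 𝓝[>] 0 ×ˢ 𝓝 (c • h) := by
  have hGT : map (c⁻¹ * ·) (𝓝[>] (0 : ℝ)) = 𝓝[>] 0 := by
    rw [map_eq_comap_of_inverse (n := (c * ·)) ?_ ?_, comap_mulLeft_nhdsGT_zero hc] <;>
      funext t <;> simp [hc.ne']
  have hsmul : map (c • ·) (𝓝 h) = 𝓝 (c • h) := (Homeomorph.smulOfNeZero c hc.ne').map_nhds_eq h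
  rw [← prod_map_map_eq', hGT, hsmul]

section PositiveHomogeneity

variable {X : Type*} [NormedAddCommGroup X] [NormedSpace ℝ X]

lemma zero_mem_bouligand {A : Set X} {u : X} (hu : u ∈ A) : 0 ∈ bouligand A u :=
  ⟨fun _ => 0, fun n => 1 / (n + 1), tendsto_const_nhds,
    tendsto_one_div_add_atTop_nhds_zero_nat, fun n => by positivity, fun n => by simpa using hu⟩

lemma smul_mem_bouligand {A : Set X} {u v : X} {c : ℝ} (hc : 0 < c)
    (hv : v ∈ bouligand A u) : c • v ∈ bouligand A u := by
  obtain ⟨vs, ts, hvs, hts, hts_pos, hmem⟩ := hv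
  refine ⟨fun n => c • vs n, fun n => ts n / c, hvs.const_smul c, by simpa using hts.div_const c,
    fun n => div_pos (hts_pos n) hc, fun n => ?_⟩
  rw [smul_smul, div_mul_cancel₀ _ hc.ne']
  exact hmem n

lemma smul_bouligand {A : Set X} {u : X} {c : ℝ} (hc : 0 < c) :
    c • bouligand A u = bouligand A u :=
  Subset.antisymm (by rintro _ ⟨v, hv, rfl⟩; exact smul_mem_bouligand hc hv)
    fun v hv => ⟨c⁻¹ • v, smul_mem_bouligand (inv_pos.2 hc) hv, smul_inv_smul₀ hc.ne' v⟩

lemma infDist_smul_bouligand (A : Set X) (u : X) {c : ℝ} (hc : 0 < c) (h : X) :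
    infDist (c • h) (bouligand A u) = c * infDist h (bouligand A u) := by
  conv_lhs => rw [← smul_bouligand (A := A) (u := u) hc]
  rw [infDist_smul₀ hc.ne', Real.norm_of_nonneg hc.le]

lemma hadamardDeriv_smul (φ : X → EReal) (x : X) {c : ℝ} (hc : 0 < c) (h : X) :
    hadamardDeriv φ x (c • h) = c * hadamardDeriv φ x h := by
  set f : ℝ × X → EReal := fun p => (((1 : ℝ) / p.1 : ℝ) : EReal) * (φ (x + p.1 • p.2) - φ x)
  have hf : f ∘ Prod.map (c⁻¹ * ·) (c • ·) = fun p => c * f p := by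
    funext p
    simp only [f, Function.comp, Prod.map, smul_smul, ← mul_assoc]
    rw [← EReal.coe_mul, mul_right_comm, inv_mul_cancel₀ hc.ne', one_mul, one_div, one_div, mul_inv,
      inv_inv]
  calc hadamardDeriv φ x (c • h)
      = liminf f (map (Prod.map (c⁻¹ * ·) (c • ·)) (𝓝[>] (0 : ℝ) ×ˢ 𝓝 h)) := by
        rw [map_prodMap_nhdsGT_zero_nhds hc]; rfl
    _ = liminf (fun p => c * f p) (𝓝[>] (0 : ℝ) ×ˢ 𝓝 h) := by rw [← hf]; rfl
    _ = c * hadamardDeriv φ x h :=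
        EReal.liminf_const_mul_of_nonneg_of_ne_top (by exact_mod_cast hc.le) (EReal.coe_ne_top c)

end PositiveHomogeneity

lemma excess_le_ofReal_iff {X : Type*} [PseudoMetricSpace X] {C D : Set X} (hD : D.Nonempty)
    {r : ℝ} (hr : 0 ≤ r) : excess C D ≤ ENNReal.ofReal r ↔ ∀ c ∈ C, infDist c D ≤ r := by
  simp only [excess, iSup₂_le_iff]
  exact forall₂_congr fun c _ => ENNReal.le_ofReal_iff_toReal_le (infEDist_ne_top hD) hr

lemma forall_le_of_le_one_iff_le_mul_max {X : Type*} [AddCommGroup X] [Module ℝ X] {g : X → ℝ}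
    {D : X → EReal} {τ : ℝ} (hg : ∀ c : ℝ, 0 < c → ∀ h, g (c • h) = c * g h)
    (hD : ∀ c : ℝ, 0 < c → ∀ h, D (c • h) = c * D h) (hτ : 0 < τ) :
    (∀ h, D h ≤ 1 → g h ≤ τ) ↔ ∀ h, (g h : EReal) ≤ τ * max (D h) 0 := by
  refine ⟨fun hbound h => ?_, fun hall h hh => ?_⟩
  · rcases le_or_gt (D h) 0 with hD_nonpos | hD_pos
    · rw [max_eq_right hD_nonpos, mul_zero, EReal.coe_nonpos]
      by_contra! hg_pos
      have hc : 0 < 2 * τ / g h := by positivity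
      have hscaled := hbound ((2 * τ / g h) • h) <| by
        rw [hD _ hc]
        exact (mul_nonpos_of_nonneg_of_nonpos (by exact_mod_cast hc.le) hD_nonpos).trans
          zero_le_one
      rw [hg _ hc, div_mul_cancel₀ _ hg_pos.ne'] at hscaled
      linarith
    · rw [max_eq_left hD_pos.le]
      obtain hD_top | hD_ne_top := eq_or_ne (D h) ⊤
      · rw [hD_top, EReal.coe_mul_top_of_pos hτ]
        exact le_top
      obtain ⟨r, hr⟩ : ∃ r : ℝ, (r : EReal) = D h := ⟨_, EReal.coe_toReal hD_ne_top hD_pos.ne_bot⟩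
      rw [← hr] at hD_pos ⊢
      have hr_pos : 0 < r := by exact_mod_cast hD_pos
      have hscaled := hbound (r⁻¹ • h) <| by
        rw [hD _ (inv_pos.2 hr_pos), ← hr, ← EReal.coe_mul, inv_mul_cancel₀ hr_pos.ne']
        exact EReal.coe_one.le
      rw [hg _ (inv_pos.2 hr_pos), inv_mul_le_iff₀ hr_pos] at hscaled
      rw [← EReal.coe_mul, mul_comm]
      exact_mod_cast hscaled
  · have hmax : (τ : EReal) * max (D h) 0 ≤ τ * 1 :=
      mul_le_mul_of_nonneg_left (max_le hh zero_le_one) (by exact_mod_cast hτ.le)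
    exact_mod_cast (hall h).trans (hmax.trans_eq (mul_one _))

theorem excess_le_iff_dist_le_general {X : Type*} [NormedAddCommGroup X] [NormedSpace ℝ X]
    (φ : X → EReal)
    (S : Set X) (τ : ℝ) (hτ : 0 < τ) (x : X) (hx : x ∈ S) :
    excess {h | hadamardDeriv φ x h ≤ 1} (bouligand S x) ≤ ENNReal.ofReal τ ↔
      ∀ h : X, ((infDist h (bouligand S x) : ℝ) : EReal) ≤
        (τ : EReal) * max (hadamardDeriv φ x h) 0 := by
  rw [excess_le_ofReal_iff ⟨0, zero_mem_bouligand hx⟩ hτ.le]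
  exact forall_le_of_le_one_iff_le_mul_max (fun _ hc => infDist_smul_bouligand S x hc)
    (fun _ hc => hadamardDeriv_smul φ x hc) hτ

theorem excess_le_iff_dist_le {X : Type*} [NormedAddCommGroup X] [NormedSpace ℝ X]
    [CompleteSpace X]
    (φ : X → EReal) (hlsc : LowerSemicontinuous φ) (hbot : ∀ x, φ x ≠ ⊥)
    (hproper : ∃ x, φ x ≠ ⊤)
    (S : Set X) (hS : S = {x | φ x ≤ 0}) (τ : ℝ) (hτ : 0 < τ) (x : X) (hx : x ∈ S) :
    excess {h | hadamardDeriv φ x h ≤ 1} (bouligand S x) ≤ ENNReal.ofReal τ ↔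
      ∀ h : X, ((infDist h (bouligand S x) : ℝ) : EReal) ≤
        (τ : EReal) * max (hadamardDeriv φ x h) 0 :=
  excess_le_iff_dist_le_general φ S τ hτ x hx
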